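/- arXiv:1806.09086 — 2 statements merged into one kernel-verified Lean document; each statement's English description precedes it below -/
import Mathlib

section
/- Let k ≥ 1, let α₀, α₁, …, α_k > 0 and β₁, …, β_k > 0 be real numbers, and set α* = α₀ + α₁ + ⋯ + α_k. Then ∫_{(0,∞)^k} ∏_{i=1}^k f_i^{α_i - 1} · (1 + Σ_{i=1}^k β_i^{-1} f_i)^{-α*} df₁ ⋯ df_k = (∏_{i=1}^k β_i^{α_i}) · Γ(α₀) (∏_{i=1}^k Γ(α_i)) / Γ(α*). Consequently the multivariate beta type II (multivariate F) density with parameters (α₀,…,α_k; β₁,…,β_k) integrates to 1 over (0,∞)^k. -/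
/-!
Write `s = α₀ + ∑ αᵢ`. Gamma subordination,
`(1 + ∑ fᵢ / βᵢ) ^ (-s) = Γ(s)⁻¹ ∫₀^∞ t ^ (s - 1) e^{-t} ∏ e^{-t fᵢ / βᵢ} dt`,
turns the integrand into a mixture of products of one-variable Gamma densities. After Tonelli,
the integral over `(0,∞)^k` factorises and contributes `∏ Γ(αᵢ) (βᵢ / t) ^ αᵢ`, which leaves
`t ^ (α₀ - 1) e^{-t}` under the outer integral, i.e. one more factor `Γ(α₀)`.
-/

open MeasureTheory Set Real

lemma integrableOn_rpow_mul_exp_neg_mul_Ioi {a r : ℝ} (ha : 0 < a) (hr : 0 < r) :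
    IntegrableOn (fun t : ℝ => t ^ (a - 1) * exp (-(r * t))) (Ioi 0) := by
  simpa [rpow_one] using integrableOn_rpow_mul_exp_neg_mul_rpow (p := 1) (by linarith) one_pos hr

lemma integral_rpow_mul_exp_neg_mul_Ioi_eq_Gamma_div {a r : ℝ} (ha : 0 < a) (hr : 0 < r) :
    ∫ t in Ioi (0 : ℝ), t ^ (a - 1) * exp (-(r * t)) = Gamma a / r ^ a := by
  rw [integral_rpow_mul_exp_neg_mul_Ioi ha hr, div_rpow zero_le_one hr.le, one_rpow]
  ring

lemma lintegral_rpow_mul_exp_neg_mul_Ioi {a r : ℝ} (ha : 0 < a) (hr : 0 < r) :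
    ∫⁻ t in Ioi (0 : ℝ), ENNReal.ofReal (t ^ (a - 1) * exp (-(r * t))) =
      ENNReal.ofReal (Gamma a / r ^ a) := by
  have hnonneg : 0 ≤ᵐ[volume.restrict (Ioi 0)] fun t : ℝ => t ^ (a - 1) * exp (-(r * t)) := by
    filter_upwards [ae_restrict_mem measurableSet_Ioi] with t (ht : 0 < t)
    positivity
  rw [← ofReal_integral_eq_lintegral_ofReal (integrableOn_rpow_mul_exp_neg_mul_Ioi ha hr) hnonneg,
    integral_rpow_mul_exp_neg_mul_Ioi_eq_Gamma_div ha hr]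

lemma ofReal_rpow_neg_eq_lintegral {c s : ℝ} (hc : 0 < c) (hs : 0 < s) :
    ENNReal.ofReal (c ^ (-s)) =
      ∫⁻ t in Ioi (0 : ℝ), ENNReal.ofReal ((Gamma s)⁻¹ * (t ^ (s - 1) * exp (-(c * t)))) := by
  have hΓ : 0 < Gamma s := Gamma_pos_of_pos hs
  simp_rw [ENNReal.ofReal_mul (inv_nonneg.2 hΓ.le)]
  rw [lintegral_const_mul' _ _ ENNReal.ofReal_ne_top, lintegral_rpow_mul_exp_neg_mul_Ioi hs hc,
    ← ENNReal.ofReal_mul (inv_nonneg.2 hΓ.le), rpow_neg hc.le]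
  congr 1
  field_simp

section

variable {ι : Type*} [Fintype ι]

lemma lintegral_pi_Ioi_prod_rpow_mul_exp_neg_mul {a r : ι → ℝ}
    (ha : ∀ i, 0 < a i) (hr : ∀ i, 0 < r i) :
    ∫⁻ f in univ.pi (fun _ : ι => Ioi (0 : ℝ)),
        ENNReal.ofReal (∏ i, f i ^ (a i - 1) * exp (-(r i * f i))) =
      ENNReal.ofReal (∏ i, Gamma (a i) / r i ^ a i) := by
  set S := univ.pi fun _ : ι => Ioi (0 : ℝ)
  set g : ι → ℝ → ℝ := fun i x => x ^ (a i - 1) * exp (-(r i * x))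
  have hint : IntegrableOn (fun f : ι → ℝ => ∏ i, g i (f i)) S := by
    rw [IntegrableOn, volume_pi, Measure.restrict_pi_pi]
    exact Integrable.fintype_prod fun i => integrableOn_rpow_mul_exp_neg_mul_Ioi (ha i) (hr i)
  have hnonneg : 0 ≤ᵐ[volume.restrict S]
      fun f : ι → ℝ => ∏ i, g i (f i) := by
    filter_upwards [ae_restrict_mem (MeasurableSet.univ_pi fun _ => measurableSet_Ioi)] with f hf
    exact Finset.prod_nonneg fun i _ => mul_nonneg (rpow_nonneg (hf i (mem_univ i)).le _)
      (exp_pos _).le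
  rw [← ofReal_integral_eq_lintegral_ofReal hint hnonneg, volume_pi, Measure.restrict_pi_pi,
    integral_fintype_prod_eq_prod g]
  exact congrArg ENNReal.ofReal (Finset.prod_congr rfl fun i _ =>
    integral_rpow_mul_exp_neg_mul_Ioi_eq_Gamma_div (ha i) (hr i))

lemma ofReal_prod_rpow_mul_one_add_sum_rpow_neg_eq_lintegral {s : ℝ} {α β f : ι → ℝ}
    (hs : 0 < s) (hβ : ∀ i, 0 < β i) (hf : ∀ i, 0 < f i) :
    ENNReal.ofReal ((∏ i, f i ^ (α i - 1)) * (1 + ∑ i, (β i)⁻¹ * f i) ^ (-s)) =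
      ∫⁻ t in Ioi (0 : ℝ), ENNReal.ofReal ((Gamma s)⁻¹ * (t ^ (s - 1) * exp (-t))) *
        ENNReal.ofReal (∏ i, f i ^ (α i - 1) * exp (-(t * (β i)⁻¹ * f i))) := by
  set c := 1 + ∑ i, (β i)⁻¹ * f i
  have hc : 0 < c := add_pos_of_pos_of_nonneg one_pos
    (Finset.sum_nonneg fun i _ => (mul_pos (inv_pos.2 (hβ i)) (hf i)).le)
  have hP : 0 ≤ ∏ i, f i ^ (α i - 1) := Finset.prod_nonneg fun i _ => (rpow_pos_of_pos (hf i) _).le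
  rw [ENNReal.ofReal_mul hP, ofReal_rpow_neg_eq_lintegral hc hs,
    ← lintegral_const_mul' _ _ ENNReal.ofReal_ne_top]
  refine setLIntegral_congr_fun measurableSet_Ioi fun t (ht : 0 < t) => ?_
  have hexp : exp (-(c * t)) = exp (-t) * ∏ i, exp (-(t * (β i)⁻¹ * f i)) := by
    have hct : c * t = t + ∑ i, t * (β i)⁻¹ * f i := by
      simp only [c, add_mul, one_mul, Finset.sum_mul]
      exact congrArg _ (Finset.sum_congr rfl fun i _ => by ring)
    rw [hct, neg_add, exp_add, ← Finset.sum_neg_distrib, exp_sum]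
  have hw : 0 ≤ (Gamma s)⁻¹ * (t ^ (s - 1) * exp (-t)) := by positivity
  rw [← ENNReal.ofReal_mul hP, ← ENNReal.ofReal_mul hw, hexp, Finset.prod_mul_distrib]
  ring_nf

lemma lintegral_pi_Ioi_prod_rpow_mul_exp_neg_mul_inv {α β : ι → ℝ}
    {t : ℝ} (hα : ∀ i, 0 < α i) (hβ : ∀ i, 0 < β i) (ht : 0 < t) :
    ∫⁻ f in univ.pi (fun _ : ι => Ioi (0 : ℝ)),
        ENNReal.ofReal (∏ i, f i ^ (α i - 1) * exp (-(t * (β i)⁻¹ * f i))) =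
      ENNReal.ofReal ((∏ i, Gamma (α i) * β i ^ α i) / t ^ ∑ i, α i) := by
  rw [lintegral_pi_Ioi_prod_rpow_mul_exp_neg_mul hα fun i => mul_pos ht (inv_pos.2 (hβ i)),
    rpow_sum_of_pos ht, ← Finset.prod_div_distrib]
  refine congrArg ENNReal.ofReal (Finset.prod_congr rfl fun i _ => ?_)
  rw [mul_rpow ht.le (inv_nonneg.2 (hβ i).le), inv_rpow (hβ i).le]
  have := rpow_pos_of_pos (hβ i) (α i)
  have := rpow_pos_of_pos ht (α i)
  field_simp

theorem lintegral_pi_Ioi_prod_rpow_mul_one_add_sum_rpow_neg {α₀ : ℝ}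
    {α β : ι → ℝ} (hα₀ : 0 < α₀) (hα : ∀ i, 0 < α i) (hβ : ∀ i, 0 < β i) :
    ∫⁻ f in univ.pi (fun _ : ι => Ioi (0 : ℝ)),
        ENNReal.ofReal ((∏ i, f i ^ (α i - 1)) * (1 + ∑ i, (β i)⁻¹ * f i) ^ (-(α₀ + ∑ i, α i))) =
      ENNReal.ofReal
        ((∏ i, β i ^ α i) * (Gamma α₀ * ∏ i, Gamma (α i)) / Gamma (α₀ + ∑ i, α i)) := by
  set s := α₀ + ∑ i, α i
  have hs : 0 < s := add_pos_of_pos_of_nonneg hα₀ (Finset.sum_nonneg fun i _ => (hα i).le)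
  set S := univ.pi fun _ : ι => Ioi (0 : ℝ)
  set C := (Gamma s)⁻¹ * ∏ i, Gamma (α i) * β i ^ α i
  have hC : 0 ≤ C := mul_nonneg (inv_nonneg.2 (Gamma_pos_of_pos hs).le)
    (Finset.prod_nonneg fun i _ => mul_nonneg (Gamma_pos_of_pos (hα i)).le
      (rpow_pos_of_pos (hβ i) _).le)
  have factorise : ∀ t ∈ Ioi (0 : ℝ), ENNReal.ofReal ((Gamma s)⁻¹ * (t ^ (s - 1) * exp (-t))) *
      ∫⁻ f in S, ENNReal.ofReal (∏ i, f i ^ (α i - 1) * exp (-(t * (β i)⁻¹ * f i))) =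
        ENNReal.ofReal C * ENNReal.ofReal (t ^ (α₀ - 1) * exp (-(1 * t))) := by
    intro t (ht : 0 < t)
    have hw : 0 ≤ (Gamma s)⁻¹ * (t ^ (s - 1) * exp (-t)) := by positivity
    have hpow : t ^ (s - 1) = t ^ (α₀ - 1) * t ^ ∑ i, α i := by
      rw [← rpow_add ht, sub_add_eq_add_sub]
    have := rpow_pos_of_pos ht (∑ i, α i)
    rw [lintegral_pi_Ioi_prod_rpow_mul_exp_neg_mul_inv hα hβ ht, ← ENNReal.ofReal_mul hw,
      ← ENNReal.ofReal_mul hC, hpow, one_mul]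
    congr 1
    simp only [C]
    field_simp
  calc _ = ∫⁻ f in S, ∫⁻ t in Ioi (0 : ℝ),
          ENNReal.ofReal ((Gamma s)⁻¹ * (t ^ (s - 1) * exp (-t))) *
            ENNReal.ofReal (∏ i, f i ^ (α i - 1) * exp (-(t * (β i)⁻¹ * f i))) :=
        setLIntegral_congr_fun (MeasurableSet.univ_pi fun _ => measurableSet_Ioi) fun f hf =>
          ofReal_prod_rpow_mul_one_add_sum_rpow_neg_eq_lintegral hs hβ fun i => hf i (mem_univ i)
    _ = ∫⁻ t in Ioi (0 : ℝ), ∫⁻ f in S,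
          ENNReal.ofReal ((Gamma s)⁻¹ * (t ^ (s - 1) * exp (-t))) *
            ENNReal.ofReal (∏ i, f i ^ (α i - 1) * exp (-(t * (β i)⁻¹ * f i))) :=
        lintegral_lintegral_swap (by fun_prop)
    _ = ∫⁻ t in Ioi (0 : ℝ), ENNReal.ofReal C * ENNReal.ofReal (t ^ (α₀ - 1) * exp (-(1 * t))) :=
        setLIntegral_congr_fun measurableSet_Ioi fun t ht => by
          rw [lintegral_const_mul' _ _ ENNReal.ofReal_ne_top, factorise t ht]
    _ = _ := by
      rw [lintegral_const_mul' _ _ ENNReal.ofReal_ne_top,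
        lintegral_rpow_mul_exp_neg_mul_Ioi hα₀ one_pos, ← ENNReal.ofReal_mul hC, one_rpow, div_one]
      simp only [C, Finset.prod_mul_distrib]
      ring_nf

theorem integral_pi_Ioi_prod_rpow_mul_one_add_sum_rpow_neg {α₀ : ℝ}
    {α β : ι → ℝ} (hα₀ : 0 < α₀) (hα : ∀ i, 0 < α i) (hβ : ∀ i, 0 < β i) :
    ∫ f in univ.pi (fun _ : ι => Ioi (0 : ℝ)),
        (∏ i, f i ^ (α i - 1)) * (1 + ∑ i, (β i)⁻¹ * f i) ^ (-(α₀ + ∑ i, α i)) =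
      (∏ i, β i ^ α i) * (Gamma α₀ * ∏ i, Gamma (α i)) / Gamma (α₀ + ∑ i, α i) := by
  have hnonneg : 0 ≤ᵐ[volume.restrict (univ.pi fun _ : ι => Ioi (0 : ℝ))] fun f : ι → ℝ =>
      (∏ i, f i ^ (α i - 1)) * (1 + ∑ i, (β i)⁻¹ * f i) ^ (-(α₀ + ∑ i, α i)) := by
    filter_upwards [ae_restrict_mem (MeasurableSet.univ_pi fun _ => measurableSet_Ioi)]
      with f hf
    have hf : ∀ i, 0 < f i := fun i => hf i (mem_univ i)
    have hsum : 0 ≤ ∑ i, (β i)⁻¹ * f i :=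
      Finset.sum_nonneg fun i _ => (mul_pos (inv_pos.2 (hβ i)) (hf i)).le
    exact mul_nonneg (Finset.prod_nonneg fun i _ => (rpow_pos_of_pos (hf i) _).le)
      (rpow_nonneg (by linarith) _)
  have hβα : 0 ≤ ∏ i, β i ^ α i := Finset.prod_nonneg fun i _ => (rpow_pos_of_pos (hβ i) _).le
  rw [integral_eq_lintegral_of_nonneg_ae hnonneg (by fun_prop),
    lintegral_pi_Ioi_prod_rpow_mul_one_add_sum_rpow_neg hα₀ hα hβ, ENNReal.toReal_ofReal]
  have hΓ : 0 ≤ ∏ i, Gamma (α i) := Finset.prod_nonneg fun i _ => (Gamma_pos_of_pos (hα i)).le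
  have hs : 0 ≤ α₀ + ∑ i, α i := add_nonneg hα₀.le (Finset.sum_nonneg fun i _ => (hα i).le)
  exact div_nonneg (mul_nonneg hβα (mul_nonneg (Gamma_pos_of_pos hα₀).le hΓ))
    (Gamma_nonneg_of_nonneg hs)

end

theorem stmt13_general (k : ℕ) (α₀ : ℝ) (hα₀ : 0 < α₀)
    (α β : Fin k → ℝ) (hα : ∀ i, 0 < α i) (hβ : ∀ i, 0 < β i)
    (αstar : ℝ) (hs : αstar = α₀ + ∑ i, α i) :
    (∫ f : Fin k → ℝ in Set.univ.pi (fun _ : Fin k => Set.Ioi (0 : ℝ)),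
        (∏ i, (f i) ^ (α i - 1)) * (1 + ∑ i, (β i)⁻¹ * f i) ^ (-αstar)) =
        (∏ i, (β i) ^ (α i)) * (Real.Gamma α₀ * ∏ i, Real.Gamma (α i)) /
          Real.Gamma αstar ∧
      (∫ f : Fin k → ℝ in Set.univ.pi (fun _ : Fin k => Set.Ioi (0 : ℝ)),
          (∏ i, (β i) ^ (-α i)) * Real.Gamma αstar /
              (Real.Gamma α₀ * ∏ i, Real.Gamma (α i)) *
            ((∏ i, (f i) ^ (α i - 1)) * (1 + ∑ i, (β i)⁻¹ * f i) ^ (-αstar))) = 1 := by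
  subst hs
  have hI := integral_pi_Ioi_prod_rpow_mul_one_add_sum_rpow_neg hα₀ hα hβ
  refine ⟨hI, ?_⟩
  have hβα : (∏ i, β i ^ (-α i)) * ∏ i, β i ^ α i = 1 := by
    rw [← Finset.prod_mul_distrib]
    exact Finset.prod_eq_one fun i _ => by rw [← rpow_add (hβ i), neg_add_cancel, rpow_zero]
  have hΓ₀ := Gamma_pos_of_pos hα₀
  have hΓ : 0 < ∏ i, Gamma (α i) := Finset.prod_pos fun i _ => Gamma_pos_of_pos (hα i)
  have hΓs : 0 < Gamma (α₀ + ∑ i, α i) :=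
    Gamma_pos_of_pos (add_pos_of_pos_of_nonneg hα₀ (Finset.sum_nonneg fun i _ => (hα i).le))
  rw [integral_const_mul, hI]
  field_simp
  linear_combination hβα

/-- Normalisation of the multivariate beta type II (multivariate F) distribution over
`(0,∞)^k`, together with the fact that the corresponding density integrates to 1. -/
theorem stmt13 (k : ℕ) (hk : 1 ≤ k) (α₀ : ℝ) (hα₀ : 0 < α₀)
    (α β : Fin k → ℝ) (hα : ∀ i, 0 < α i) (hβ : ∀ i, 0 < β i)
    (αstar : ℝ) (hs : αstar = α₀ + ∑ i, α i) :
    (∫ f : Fin k → ℝ in Set.univ.pi (fun _ : Fin k => Set.Ioi (0 : ℝ)),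
        (∏ i, (f i) ^ (α i - 1)) * (1 + ∑ i, (β i)⁻¹ * f i) ^ (-αstar)) =
        (∏ i, (β i) ^ (α i)) * (Real.Gamma α₀ * ∏ i, Real.Gamma (α i)) /
          Real.Gamma αstar ∧
      (∫ f : Fin k → ℝ in Set.univ.pi (fun _ : Fin k => Set.Ioi (0 : ℝ)),
          (∏ i, (β i) ^ (-α i)) * Real.Gamma αstar /
              (Real.Gamma α₀ * ∏ i, Real.Gamma (α i)) *
            ((∏ i, (f i) ^ (α i - 1)) * (1 + ∑ i, (β i)⁻¹ * f i) ^ (-αstar))) = 1 :=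
  stmt13_general k α₀ hα₀ α β hα hβ αstar hs
end

section
/- Let k ≥ 1, let α₀, α₁, …, α_k > 0 and σ₀, σ₁, …, σ_k > 0 be real numbers with α* = α₀ + ⋯ + α_k, and let h : [0, ∞) → [0, ∞] be measurable with ∫₀^∞ z^{α* - 1} h(z) dz = Γ(α*)/π^{α*}. Then ∫_{(0,∞)} ∫_{(0,∞)^k} (π^{α*} / ∏_{i=0}^k (σ_i^{2α_i} Γ(α_i))) · s^{α* - 1} · ∏_{i=1}^k f_i^{α_i - 1} · h(s σ₀^{-2} (1 + σ₀² Σ_{i=1}^k σ_i^{-2} f_i)) df ds = 1; that is, the multivariate generalised gamma–beta type II density with parameters (α₀,…,α_k; σ₀²,…,σ_k²; h) integrates to 1. -/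
/-!
For fixed `s`, the substitution `f = x / s` in the inner integral turns the density into
`s^(α₀-1) ∏ xᵢ^(αᵢ-1) h(s/σ₀² + ∑ xᵢ/σᵢ²)`, so the whole integral is a Liouville integral over
`(0,∞)^(k+1)`. Liouville's formula
`∫_{(0,∞)ⁿ} ∏ xᵢ^(aᵢ-1) g(∑ cᵢ xᵢ) dx = ∏ Γ(aᵢ) cᵢ^(-aᵢ) / Γ(∑ aᵢ) · ∫₀^∞ z^(∑ aᵢ-1) g(z) dz`
follows by induction on `n` from the scaling `x ↦ c x` and the beta convolution
`∫∫ x^(a-1) y^(b-1) g(x+y) dy dx = B(a,b) ∫ z^(a+b-1) g(z) dz`. With `cᵢ = σᵢ⁻²` its prefactor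
cancels the normalising constant of the density, and the normalisation of `h` does the rest.
-/

open MeasureTheory Set ProbabilityTheory Module
open scoped ENNReal

section Scaling

variable {E : Type*} [NormedAddCommGroup E] [NormedSpace ℝ E] [MeasurableSpace E] [BorelSpace E]
  [FiniteDimensional ℝ E] (μ : Measure E) [μ.IsAddHaarMeasure]

theorem setLIntegral_comp_smul_preimage {r : ℝ} (hr : 0 < r) (f : E → ℝ≥0∞) (S : Set E) :
    ∫⁻ x in (r • ·) ⁻¹' S, f (r • x) ∂μ =
      ENNReal.ofReal (r ^ finrank ℝ E)⁻¹ * ∫⁻ x in S, f x ∂μ := by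
  rw [((measurable_const_smul r).measurePreserving μ).setLIntegral_comp_preimage_emb
      (MeasurableEquiv.smul₀ r hr.ne').measurableEmbedding, Measure.map_addHaar_smul μ hr.ne',
    Measure.restrict_smul, lintegral_smul_measure, abs_of_pos (by positivity), smul_eq_mul]

theorem setLIntegral_mul_comp_smul_of_homogeneous {S : Set E} {w : E → ℝ≥0∞} {p r : ℝ}
    (hr : 0 < r) (hS : (r • ·) ⁻¹' S = S) (hw : ∀ x ∈ S, w (r • x) = ENNReal.ofReal (r ^ p) * w x)
    (hSm : MeasurableSet S) (g : E → ℝ≥0∞) :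
    ∫⁻ x in S, w x * g (r • x) ∂μ =
      ENNReal.ofReal (r ^ (-(p + finrank ℝ E))) * ∫⁻ x in S, w x * g x ∂μ := by
  have hw' : ∀ x ∈ S, w x * g (r • x) = ENNReal.ofReal (r ^ (-p)) * (w (r • x) * g (r • x)) := by
    intro x hx
    rw [hw x hx, ← mul_assoc, ← mul_assoc, ← ENNReal.ofReal_mul (by positivity), ← Real.rpow_add hr,
      neg_add_cancel, Real.rpow_zero, ENNReal.ofReal_one, one_mul]
  rw [setLIntegral_congr_fun hSm hw', lintegral_const_mul' _ _ ENNReal.ofReal_ne_top]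
  nth_rw 1 [← hS]
  rw [setLIntegral_comp_smul_preimage μ hr (fun y => w y * g y), ← mul_assoc,
    ← ENNReal.ofReal_mul (by positivity), ← Real.rpow_natCast, ← Real.rpow_neg hr.le,
    ← Real.rpow_add hr, neg_add]

end Scaling

theorem lintegral_Ioi_rpow_mul_comp_mul (a : ℝ) {c : ℝ} (hc : 0 < c) (g : ℝ → ℝ≥0∞) :
    ∫⁻ x in Ioi 0, ENNReal.ofReal (x ^ (a - 1)) * g (c * x) =
      ENNReal.ofReal (c ^ (-a)) * ∫⁻ z in Ioi 0, ENNReal.ofReal (z ^ (a - 1)) * g z := by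
  have := setLIntegral_mul_comp_smul_of_homogeneous volume (S := Ioi (0 : ℝ))
    (w := fun x => ENNReal.ofReal (x ^ (a - 1))) (p := a - 1) hc
    (by simpa using preimage_const_mul_Ioi₀ 0 hc)
    (fun x hx => by
      rw [smul_eq_mul, Real.mul_rpow hc.le (le_of_lt hx), ENNReal.ofReal_mul (by positivity)])
    measurableSet_Ioi g
  simpa using this

theorem lintegral_Ioo_rpow_mul_one_sub_rpow {a b : ℝ} (ha : 0 < a) (hb : 0 < b) :
    ∫⁻ x in Ioo 0 1, ENNReal.ofReal (x ^ (a - 1) * (1 - x) ^ (b - 1)) =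
      ENNReal.ofReal (beta a b) := by
  have h := lintegral_betaPDF_eq_one ha hb
  rw [lintegral_betaPDF] at h
  simp_rw [mul_assoc, ENNReal.ofReal_mul (one_div_pos.2 (beta_pos ha hb)).le] at h
  rw [lintegral_const_mul' _ _ ENNReal.ofReal_ne_top] at h
  have hβ := beta_pos ha hb
  calc _ = ENNReal.ofReal (beta a b) * (ENNReal.ofReal (1 / beta a b) *
        ∫⁻ x in Ioo 0 1, ENNReal.ofReal (x ^ (a - 1) * (1 - x) ^ (b - 1))) := by
        rw [← mul_assoc, ← ENNReal.ofReal_mul hβ.le, mul_one_div_cancel hβ.ne', ENNReal.ofReal_one,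
          one_mul]
    _ = ENNReal.ofReal (beta a b) := by rw [h, mul_one]

theorem lintegral_Ioo_rpow_mul_sub_rpow {a b z : ℝ} (ha : 0 < a) (hb : 0 < b) (hz : 0 < z) :
    ∫⁻ x in Ioo 0 z, ENNReal.ofReal (x ^ (a - 1) * (z - x) ^ (b - 1)) =
      ENNReal.ofReal (z ^ (a + b - 1) * beta a b) := by
  have h := setLIntegral_comp_smul_preimage volume hz
    (fun x => ENNReal.ofReal (x ^ (a - 1) * (z - x) ^ (b - 1))) (Ioo 0 z)
  have hpre : (z • ·) ⁻¹' Ioo 0 z = Ioo (0 : ℝ) 1 := by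
    simpa [div_self hz.ne'] using preimage_const_mul_Ioo₀ 0 z hz
  have hscale : ∀ x ∈ Ioo (0 : ℝ) 1, ENNReal.ofReal ((z • x) ^ (a - 1) * (z - z • x) ^ (b - 1)) =
      ENNReal.ofReal (z ^ (a + b - 2)) * ENNReal.ofReal (x ^ (a - 1) * (1 - x) ^ (b - 1)) := by
    rintro x ⟨hx0, hx1⟩
    rw [smul_eq_mul, ← ENNReal.ofReal_mul (by positivity), show z - z * x = z * (1 - x) by ring,
      Real.mul_rpow hz.le hx0.le, Real.mul_rpow hz.le (by linarith), mul_mul_mul_comm,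
      ← Real.rpow_add hz, show a - 1 + (b - 1) = a + b - 2 by ring]
  rw [hpre, setLIntegral_congr_fun measurableSet_Ioo hscale,
    lintegral_const_mul' _ _ ENNReal.ofReal_ne_top, lintegral_Ioo_rpow_mul_one_sub_rpow ha hb,
    finrank_self, pow_one] at h
  calc _ = ENNReal.ofReal z * (ENNReal.ofReal z⁻¹ *
        ∫⁻ x in Ioo 0 z, ENNReal.ofReal (x ^ (a - 1) * (z - x) ^ (b - 1))) := by
        rw [← mul_assoc, ← ENNReal.ofReal_mul hz.le, mul_inv_cancel₀ hz.ne', ENNReal.ofReal_one,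
          one_mul]
    _ = ENNReal.ofReal (z ^ (a + b - 1) * beta a b) := by
      rw [← h, ← mul_assoc, ← ENNReal.ofReal_mul hz.le, ← ENNReal.ofReal_mul (by positivity),
        mul_comm z, ← Real.rpow_add_one hz.ne', show a + b - 2 + 1 = a + b - 1 by ring]

theorem setLIntegral_Ioi_comp_add (x : ℝ) (f : ℝ → ℝ≥0∞) :
    ∫⁻ y in Ioi 0, f (x + y) = ∫⁻ z in Ioi x, f z := by
  have := (measurePreserving_add_left volume x).setLIntegral_comp_preimage_emb
    (measurableEmbedding_addLeft x) f (Ioi x)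
  rwa [preimage_const_add_Ioi, sub_self] at this

theorem lintegral_Ioi_rpow_mul_lintegral_Ioi_rpow_mul_comp_add {a b : ℝ} (ha : 0 < a) (hb : 0 < b)
    {g : ℝ → ℝ≥0∞} (hg : Measurable g) :
    ∫⁻ x in Ioi 0, ENNReal.ofReal (x ^ (a - 1)) *
        ∫⁻ y in Ioi 0, ENNReal.ofReal (y ^ (b - 1)) * g (x + y) =
      ENNReal.ofReal (beta a b) * ∫⁻ z in Ioi 0, ENNReal.ofReal (z ^ (a + b - 1)) * g z := by
  -- `F x z` is the integrand after `y = z - x`; in the other order of integration the `x`-integral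
  -- over `0 < x < z` is a beta integral
  let F : ℝ → ℝ → ℝ≥0∞ := fun x z =>
    if x < z then ENNReal.ofReal (x ^ (a - 1) * (z - x) ^ (b - 1)) * g z else 0
  have hF : Measurable (Function.uncurry F) :=
    Measurable.ite (measurableSet_lt measurable_fst measurable_snd) (by fun_prop) measurable_const
  have inner_x : ∀ x ∈ Ioi (0 : ℝ), ENNReal.ofReal (x ^ (a - 1)) *
      ∫⁻ y in Ioi 0, ENNReal.ofReal (y ^ (b - 1)) * g (x + y) = ∫⁻ z in Ioi 0, F x z := by
    intro x hx
    have hFx : F x = (Ioi x).indicator fun z =>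
        ENNReal.ofReal (x ^ (a - 1) * (z - x) ^ (b - 1)) * g z := by
      ext z; simp [F, indicator]
    rw [hFx, setLIntegral_indicator measurableSet_Ioi,
      inter_eq_left.2 (Ioi_subset_Ioi (le_of_lt hx)),
      ← setLIntegral_Ioi_comp_add x, ← lintegral_const_mul' _ _ ENNReal.ofReal_ne_top]
    refine setLIntegral_congr_fun measurableSet_Ioi fun y _ => ?_
    rw [add_sub_cancel_left, ENNReal.ofReal_mul (Real.rpow_nonneg (le_of_lt hx) _), mul_assoc]
  have inner_z : ∀ z ∈ Ioi (0 : ℝ), ∫⁻ x in Ioi 0, F x z =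
      ENNReal.ofReal (beta a b) * (ENNReal.ofReal (z ^ (a + b - 1)) * g z) := by
    intro z hz
    have hFz : (F · z) = (Iio z).indicator fun x =>
        ENNReal.ofReal (x ^ (a - 1) * (z - x) ^ (b - 1)) * g z := by
      ext x; simp [F, indicator]
    rw [hFz, setLIntegral_indicator measurableSet_Iio, Iio_inter_Ioi,
      lintegral_mul_const _ (by fun_prop), lintegral_Ioo_rpow_mul_sub_rpow ha hb hz,
      ENNReal.ofReal_mul (Real.rpow_nonneg (le_of_lt hz) _)]
    ring
  rw [setLIntegral_congr_fun measurableSet_Ioi inner_x, lintegral_lintegral_swap hF.aemeasurable,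
    setLIntegral_congr_fun measurableSet_Ioi inner_z,
    lintegral_const_mul' _ _ ENNReal.ofReal_ne_top]

theorem lintegral_Ioi_rpow_mul_lintegral_Ioi_rpow_mul_comp_mul_add {a b c : ℝ} (ha : 0 < a)
    (hb : 0 < b) (hc : 0 < c) {g : ℝ → ℝ≥0∞} (hg : Measurable g) :
    ∫⁻ x in Ioi 0, ENNReal.ofReal (x ^ (a - 1)) *
        ∫⁻ y in Ioi 0, ENNReal.ofReal (y ^ (b - 1)) * g (c * x + y) =
      ENNReal.ofReal (c ^ (-a) * beta a b) *
        ∫⁻ z in Ioi 0, ENNReal.ofReal (z ^ (a + b - 1)) * g z := by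
  rw [lintegral_Ioi_rpow_mul_comp_mul a hc
      (fun u => ∫⁻ y in Ioi 0, ENNReal.ofReal (y ^ (b - 1)) * g (u + y)),
    lintegral_Ioi_rpow_mul_lintegral_Ioi_rpow_mul_comp_add ha hb hg, ← mul_assoc,
    ← ENNReal.ofReal_mul (by positivity)]

theorem lintegral_pi_Ioi_prod_rpow_mul_comp_smul {n : ℕ} (a : Fin n → ℝ) {r : ℝ} (hr : 0 < r)
    (G : (Fin n → ℝ) → ℝ≥0∞) :
    ∫⁻ x in univ.pi fun _ => Ioi 0, (∏ i, ENNReal.ofReal (x i ^ (a i - 1))) * G (r • x) =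
      ENNReal.ofReal (r ^ (-∑ i, a i)) *
        ∫⁻ x in univ.pi fun _ => Ioi 0, (∏ i, ENNReal.ofReal (x i ^ (a i - 1))) * G x := by
  have hS : (r • ·) ⁻¹' (univ.pi fun _ : Fin n => Ioi (0 : ℝ)) = univ.pi fun _ => Ioi 0 := by
    ext x; simp [mul_pos_iff_of_pos_left hr]
  have hw : ∀ x ∈ univ.pi fun _ : Fin n => Ioi (0 : ℝ),
      ∏ i, ENNReal.ofReal ((r • x) i ^ (a i - 1)) =
        ENNReal.ofReal (r ^ ∑ i, (a i - 1)) * ∏ i, ENNReal.ofReal (x i ^ (a i - 1)) := by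
    intro x hx
    rw [Real.rpow_sum_of_pos hr, ENNReal.ofReal_prod_of_nonneg (fun i _ => by positivity),
      ← Finset.prod_mul_distrib]
    refine Finset.prod_congr rfl fun i _ => ?_
    rw [Pi.smul_apply, smul_eq_mul, Real.mul_rpow hr.le (le_of_lt (hx i (mem_univ i))),
      ENNReal.ofReal_mul (by positivity)]
  rw [setLIntegral_mul_comp_smul_of_homogeneous volume hr hS hw
      (MeasurableSet.univ_pi fun _ => measurableSet_Ioi) G, finrank_fin_fun,
    Finset.sum_sub_distrib, Finset.sum_const, Finset.card_univ, Fintype.card_fin, nsmul_one,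
    sub_add_cancel]

theorem volume_restrict_pi_Ioi (n : ℕ) :
    (volume : Measure (Fin n → ℝ)).restrict (univ.pi fun _ => Ioi 0) =
      Measure.pi fun _ => volume.restrict (Ioi 0) := by
  rw [volume_pi, Measure.restrict_pi_pi]

theorem lintegral_pi_fin_succ {X : Type*} [MeasurableSpace X] (μ : Measure X) [SigmaFinite μ]
    {n : ℕ} {F : (Fin (n + 1) → X) → ℝ≥0∞} (hF : Measurable F) :
    ∫⁻ x, F x ∂Measure.pi (fun _ => μ) =
      ∫⁻ y, ∫⁻ w, F (Fin.cons y w) ∂Measure.pi (fun _ => μ) ∂μ := by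
  let e := (MeasurableEquiv.piFinSuccAbove (fun _ : Fin (n + 1) => X) 0).symm
  rw [← (measurePreserving_piFinSuccAbove (fun _ => μ) 0).symm.lintegral_comp_emb
      e.measurableEmbedding,
    lintegral_prod (fun p => F (e p)) (hF.comp e.measurable).aemeasurable]
  simp [e, MeasurableEquiv.piFinSuccAbove_symm_apply, Fin.insertNthEquiv]

noncomputable def liouvilleIntegral {n : ℕ} (a c : Fin n → ℝ) (g : ℝ → ℝ≥0∞) : ℝ≥0∞ :=
  ∫⁻ x in univ.pi fun _ => Ioi 0, (∏ i, ENNReal.ofReal (x i ^ (a i - 1))) * g (∑ i, c i * x i)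

theorem liouvilleIntegral_zero (a c : Fin 0 → ℝ) (g : ℝ → ℝ≥0∞) :
    liouvilleIntegral a c g = g 0 := by
  simp [liouvilleIntegral, volume_pi]

theorem liouvilleIntegral_succ {n : ℕ} (a c : Fin (n + 1) → ℝ) {g : ℝ → ℝ≥0∞}
    (hg : Measurable g) :
    liouvilleIntegral a c g = ∫⁻ y in Ioi 0, ENNReal.ofReal (y ^ (a 0 - 1)) *
      liouvilleIntegral (Fin.tail a) (Fin.tail c) (g <| c 0 * y + ·) := by
  simp only [liouvilleIntegral, volume_restrict_pi_Ioi]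
  rw [lintegral_pi_fin_succ _ (by fun_prop)]
  refine lintegral_congr fun y => ?_
  simp only [Fin.prod_univ_succ, Fin.sum_univ_succ, Fin.cons_zero, Fin.cons_succ, Fin.tail,
    mul_assoc]
  exact lintegral_const_mul' _ _ ENNReal.ofReal_ne_top

theorem liouvilleIntegral_eq {n : ℕ} {a c : Fin (n + 1) → ℝ} (ha : ∀ i, 0 < a i)
    (hc : ∀ i, 0 < c i) {g : ℝ → ℝ≥0∞} (hg : Measurable g) :
    liouvilleIntegral a c g =
      ENNReal.ofReal ((∏ i, Real.Gamma (a i) * c i ^ (-a i)) / Real.Gamma (∑ i, a i)) *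
        ∫⁻ z in Ioi 0, ENNReal.ofReal (z ^ (∑ i, a i - 1)) * g z := by
  induction n generalizing g with
  | zero =>
    simp_rw [liouvilleIntegral_succ a c hg, liouvilleIntegral_zero, add_zero]
    rw [lintegral_Ioi_rpow_mul_comp_mul _ (hc 0) g, Fin.prod_univ_one, Fin.sum_univ_one,
      mul_div_cancel_left₀ _ (Real.Gamma_pos_of_pos (ha 0)).ne']
  | succ n ih =>
    set B := ∑ i, Fin.tail a i
    have hB : 0 < B := Finset.sum_pos (fun i _ => ha i.succ) Finset.univ_nonempty
    have tail_eq : ∀ y, liouvilleIntegral (Fin.tail a) (Fin.tail c) (g <| c 0 * y + ·) =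
        ENNReal.ofReal ((∏ i, Real.Gamma (Fin.tail a i) * Fin.tail c i ^ (-Fin.tail a i)) /
          Real.Gamma B) * ∫⁻ z in Ioi 0, ENNReal.ofReal (z ^ (B - 1)) * g (c 0 * y + z) :=
      fun y => ih (fun i => ha i.succ) (fun i => hc i.succ) (by fun_prop)
    simp_rw [liouvilleIntegral_succ a c hg, tail_eq]
    simp_rw [mul_left_comm (ENNReal.ofReal (_ ^ (a 0 - 1)))]
    rw [lintegral_const_mul' _ _ ENNReal.ofReal_ne_top,
      lintegral_Ioi_rpow_mul_lintegral_Ioi_rpow_mul_comp_mul_add (ha 0) hB (hc 0) hg, ← mul_assoc,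
      ← ENNReal.ofReal_mul' (mul_nonneg (Real.rpow_nonneg (hc 0).le _) (beta_pos (ha 0) hB).le),
      Fin.prod_univ_succ (fun i => Real.Gamma (a i) * c i ^ (-a i)),
      Fin.sum_univ_succ]
    congr 2
    have := (Real.Gamma_pos_of_pos hB).ne'
    simp only [beta, Fin.tail] at this ⊢
    field_simp
    rfl

theorem lintegral_Ioi_rpow_mul_lintegral_pi_Ioi_eq_liouvilleIntegral {k : ℕ} (a₀ c₀ : ℝ)
    (a c : Fin k → ℝ) {g : ℝ → ℝ≥0∞} (hg : Measurable g) :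
    ∫⁻ s in Ioi 0, ENNReal.ofReal (s ^ (a₀ + ∑ i, a i - 1)) *
        ∫⁻ f in univ.pi fun _ => Ioi 0,
          (∏ i, ENNReal.ofReal (f i ^ (a i - 1))) * g (s * (c₀ + ∑ i, c i * f i)) =
      liouvilleIntegral (Fin.cons a₀ a) (Fin.cons c₀ c) g := by
  rw [liouvilleIntegral_succ _ _ hg]
  refine setLIntegral_congr_fun measurableSet_Ioi fun s hs => ?_
  have hscale := lintegral_pi_Ioi_prod_rpow_mul_comp_smul a hs
    fun x => g (c₀ * s + ∑ i, c i * x i)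
  have harg : ∀ f : Fin k → ℝ,
      s * (c₀ + ∑ i, c i * f i) = c₀ * s + ∑ i, c i * (s • f) i := by
    intro f
    simp only [Pi.smul_apply, smul_eq_mul, mul_add, Finset.mul_sum]
    congr 1
    · ring
    · exact Finset.sum_congr rfl fun i _ => by ring
  simp_rw [harg, hscale, ← mul_assoc, ← ENNReal.ofReal_mul (Real.rpow_nonneg (le_of_lt hs) _),
    ← Real.rpow_add hs, show a₀ + ∑ i, a i - 1 + -∑ i, a i = a₀ - 1 by ring]
  rfl

theorem Real.inv_sq_rpow_neg {t : ℝ} (ht : 0 < t) (b : ℝ) : ((t ^ 2)⁻¹) ^ (-b) = t ^ (2 * b) := by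
  rw [Real.inv_rpow (by positivity), ← Real.rpow_neg (by positivity), neg_neg, ← Real.rpow_natCast,
    ← Real.rpow_mul ht.le, Nat.cast_ofNat]

theorem stmt15_general (k : ℕ) (α₀ σ₀ : ℝ) (hα₀ : 0 < α₀) (hσ₀ : 0 < σ₀)
    (α σ : Fin k → ℝ) (hα : ∀ i, 0 < α i) (hσ : ∀ i, 0 < σ i)
    (αstar : ℝ) (hs : αstar = α₀ + ∑ i, α i)
    (h : ℝ → ℝ≥0∞) (hh : Measurable h)
    (hnorm : ∫⁻ z in Set.Ioi (0 : ℝ), ENNReal.ofReal (z ^ (αstar - 1)) * h z =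
      ENNReal.ofReal (Real.Gamma αstar / Real.pi ^ αstar)) :
    ∫⁻ s in Set.Ioi (0 : ℝ),
      ∫⁻ f : Fin k → ℝ in Set.univ.pi (fun _ : Fin k => Set.Ioi (0 : ℝ)),
        ENNReal.ofReal (Real.pi ^ αstar /
            (σ₀ ^ (2 * α₀) * Real.Gamma α₀ *
              ∏ i, (σ i ^ (2 * α i) * Real.Gamma (α i)))) *
          ENNReal.ofReal (s ^ (αstar - 1)) *
          (∏ i, ENNReal.ofReal ((f i) ^ (α i - 1))) *
          h (s * (σ₀ ^ 2)⁻¹ * (1 + σ₀ ^ 2 * ∑ i, ((σ i) ^ 2)⁻¹ * f i)) = 1 := by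
  subst hs
  set C := Real.pi ^ (α₀ + ∑ i, α i) /
    (σ₀ ^ (2 * α₀) * Real.Gamma α₀ * ∏ i, (σ i ^ (2 * α i) * Real.Gamma (α i)))
  have hP : 0 < ∏ i, σ i ^ (2 * α i) * Real.Gamma (α i) := Finset.prod_pos fun i _ =>
    mul_pos (Real.rpow_pos_of_pos (hσ i) _) (Real.Gamma_pos_of_pos (hα i))
  have hC : 0 < C :=
    div_pos (by positivity) (mul_pos (mul_pos (by positivity) (Real.Gamma_pos_of_pos hα₀)) hP)
  have harg : ∀ (s : ℝ) (f : Fin k → ℝ), s * (σ₀ ^ 2)⁻¹ * (1 + σ₀ ^ 2 * ∑ i, (σ i ^ 2)⁻¹ * f i) =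
      s * ((σ₀ ^ 2)⁻¹ + ∑ i, (σ i ^ 2)⁻¹ * f i) := fun s f => by field_simp
  have hΓ : 0 < Real.Gamma (α₀ + ∑ i, α i) :=
    Real.Gamma_pos_of_pos (add_pos_of_pos_of_nonneg hα₀ (Finset.sum_nonneg fun i _ => (hα i).le))
  set a : Fin (k + 1) → ℝ := Fin.cons α₀ α
  set c : Fin (k + 1) → ℝ := Fin.cons (σ₀ ^ 2)⁻¹ fun i => (σ i ^ 2)⁻¹
  have hK : C * ((∏ i, Real.Gamma (a i) * c i ^ (-a i)) / Real.Gamma (α₀ + ∑ i, α i) *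
      (Real.Gamma (α₀ + ∑ i, α i) / Real.pi ^ (α₀ + ∑ i, α i))) = 1 := by
    simp only [C, a, c, Fin.prod_univ_succ, Fin.cons_zero, Fin.cons_succ, Real.inv_sq_rpow_neg hσ₀,
      Real.inv_sq_rpow_neg (hσ _)]
    field_simp
    exact Finset.prod_congr rfl fun i _ => mul_comm _ _
  have ha : ∀ i, 0 < a i := Fin.cases hα₀ hα
  have hc : ∀ i, 0 < c i :=
    Fin.cases (inv_pos.2 (by positivity)) fun i => inv_pos.2 (pow_pos (hσ i) 2)
  calc _ = ENNReal.ofReal C * liouvilleIntegral a c h := by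
        simp_rw [harg, mul_assoc, lintegral_const_mul' _ _ ENNReal.ofReal_ne_top]
        rw [lintegral_Ioi_rpow_mul_lintegral_pi_Ioi_eq_liouvilleIntegral _ _ _ _ hh]
    _ = 1 := by
      rw [liouvilleIntegral_eq ha hc hh, Fin.sum_cons, hnorm,
        ← ENNReal.ofReal_mul' (div_nonneg hΓ.le (by positivity)), ← ENNReal.ofReal_mul hC.le, hK,
        ENNReal.ofReal_one]

/-- The multivariate generalised gamma–beta type II density with parameters
`(α₀,…,α_k; σ₀²,…,σ_k²; h)` integrates to 1 over `(0,∞) × (0,∞)^k`, whenever the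
generator `h` satisfies `∫₀^∞ z^{α*-1} h(z) dz = Γ(α*)/π^{α*}`, `α* = α₀ + Σ αᵢ`. -/
theorem stmt15 (k : ℕ) (hk : 1 ≤ k) (α₀ σ₀ : ℝ) (hα₀ : 0 < α₀) (hσ₀ : 0 < σ₀)
    (α σ : Fin k → ℝ) (hα : ∀ i, 0 < α i) (hσ : ∀ i, 0 < σ i)
    (αstar : ℝ) (hs : αstar = α₀ + ∑ i, α i)
    (h : ℝ → ℝ≥0∞) (hh : Measurable h)
    (hnorm : ∫⁻ z in Set.Ioi (0 : ℝ), ENNReal.ofReal (z ^ (αstar - 1)) * h z =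
      ENNReal.ofReal (Real.Gamma αstar / Real.pi ^ αstar)) :
    ∫⁻ s in Set.Ioi (0 : ℝ),
      ∫⁻ f : Fin k → ℝ in Set.univ.pi (fun _ : Fin k => Set.Ioi (0 : ℝ)),
        ENNReal.ofReal (Real.pi ^ αstar /
            (σ₀ ^ (2 * α₀) * Real.Gamma α₀ *
              ∏ i, (σ i ^ (2 * α i) * Real.Gamma (α i)))) *
          ENNReal.ofReal (s ^ (αstar - 1)) *
          (∏ i, ENNReal.ofReal ((f i) ^ (α i - 1))) *
          h (s * (σ₀ ^ 2)⁻¹ * (1 + σ₀ ^ 2 * ∑ i, ((σ i) ^ 2)⁻¹ * f i)) = 1 :=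
  stmt15_general k α₀ σ₀ hα₀ hσ₀ α σ hα hσ αstar hs h hh hnorm
end
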